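/- arXiv:0910.0633 — 6 statements merged into one kernel-verified Lean document; each statement's English description precedes it below -/
import Mathlib

section
/- (Proposition 3.7) Let 𝔞 → A be a homomorphism of finite-dimensional K-algebras such that, regarding A as a left 𝔞-module via this homomorphism, (rad 𝔞)A = rad A. Then for finite-dimensional A-modules M and L with L completely reducible, the natural restriction map Ext^1_A(M,L) → Ext^1_𝔞(M,L) is injective; equivalently, every short exact sequence 0 → L → E → M → 0 of A-modules which splits after restriction of scalars along 𝔞 → A already splits as a sequence of A-modules. -/
/-- The Jacobson radical of a `K`-algebra `A`, viewed as a `K`-submodule of `A`. -/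
def jacobsonRadical (K : Type*) (A : Type*) [Field K] [Ring A] [Algebra K A] :
    Submodule K A :=
  Submodule.restrictScalars K (Ideal.jacobson (⊥ : Ideal A))

/-!
Write `J = rad A`. For `x ∈ rad 𝔞` the element `f x` lies in `J`, hence kills the semisimple
module `L`; as the `𝔞`-linear section `σ` commutes with `f x`, decomposing `e = σ (π e) + ι l`
gives `f x • e = σ (x • π e)`. Since `J = f (rad 𝔞) A`, the `A`-submodule `J E` therefore lies in
`σ (M)`, which meets `ι (L)` trivially. So `L` embeds into `E ⧸ J E`, a semisimple module because
`A` is artinian; this embedding splits, giving an `A`-linear retraction of `ι` and hence an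
`A`-linear section of `π`.
-/

open LinearMap

section

variable {A : Type*} [Ring A] {L E M : Type*} [AddCommGroup L] [Module A L]
  [AddCommGroup E] [Module A E] [AddCommGroup M] [Module A M]

theorem isSemisimpleModule_quotient_jacobson_smul_top [IsSemiprimaryRing A] :
    IsSemisimpleModule A (E ⧸ Ring.jacobson A • (⊤ : Submodule A E)) :=
  (Module.isTorsionBySet_quotient_ideal_smul E (Ring.jacobson A)).isSemisimpleModule_iff.mp
    inferInstance

theorem exists_leftInverse_of_disjoint_jacobson_smul_top [IsSemiprimaryRing A] {ι : L →ₗ[A] E}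
    (hι : Function.Injective ι) (hdisj : Disjoint (range ι) (Ring.jacobson A • ⊤)) :
    ∃ r : E →ₗ[A] L, r ∘ₗ ι = LinearMap.id := by
  have hinj : Function.Injective ((Ring.jacobson A • ⊤ : Submodule A E).mkQ ∘ₗ ι) := by
    refine (injective_iff_map_eq_zero _).mpr fun l hl ↦ hι ?_
    rw [comp_apply, Submodule.mkQ_apply, Submodule.Quotient.mk_eq_zero] at hl
    rw [Submodule.disjoint_def.mp hdisj _ (mem_range_self ι l) hl, map_zero]
  have := isSemisimpleModule_quotient_jacobson_smul_top (A := A) (E := E)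
  obtain ⟨h, hh⟩ := IsSemisimpleModule.extension_property _ hinj LinearMap.id
  exact ⟨h ∘ₗ Submodule.mkQ _, by rw [comp_assoc, hh]⟩

variable {ι : L →ₗ[A] E} {π : E →ₗ[A] M}

theorem smul_mem_range_of_mem_annihilator (hexact : range ι = ker π) {σ : M →+ E}
    (hσ : ∀ m, π (σ m) = m) {a : A} (ha : a ∈ Module.annihilator A L)
    (hσa : ∀ m, σ (a • m) = a • σ m) (e : E) : a • e ∈ σ.range := by
  obtain ⟨l, hl⟩ : e - σ (π e) ∈ range ι := by rw [hexact, mem_ker, map_sub, hσ, sub_self]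
  refine ⟨a • π e, ?_⟩
  calc σ (a • π e) = a • ι l + a • σ (π e) := by
        rw [← map_smul ι, Module.mem_annihilator.mp ha l, map_zero, zero_add, hσa]
    _ = a • e := by rw [← smul_add, hl, sub_add_cancel]

theorem disjoint_range_of_le_range_section (hexact : range ι = ker π) {σ : M →+ E}
    (hσ : ∀ m, π (σ m) = m) {N : Submodule A E} (hN : N.toAddSubgroup ≤ σ.range) :
    Disjoint (range ι) N := by
  refine Submodule.disjoint_def.mpr ?_
  rintro _ ⟨l, rfl⟩ hl
  obtain ⟨m, hm⟩ := hN hl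
  have hπι : π (ι l) = 0 := by rw [← mem_ker, ← hexact]; exact mem_range_self ι l
  rw [← hm, ← hσ m, hm, hπι, map_zero]

theorem jacobson_smul_top_le_of_smul_mem {K : Type*} [CommSemiring K] [Algebra K A]
    {I : Submodule K A} (hI : (Ring.jacobson A).restrictScalars K ≤ I * ⊤) {G : AddSubgroup E}
    (hIG : ∀ a ∈ I, ∀ e : E, a • e ∈ G) :
    (Ring.jacobson A • (⊤ : Submodule A E)).toAddSubgroup ≤ G := by
  have hIG' : ∀ r ∈ I * ⊤, ∀ e : E, r • e ∈ G := fun r hr ↦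
    Submodule.mul_induction_on hr (fun a ha b _ e ↦ by rw [mul_smul]; exact hIG a ha _)
      fun r s hr hs e ↦ by rw [add_smul]; exact add_mem (hr e) (hs e)
  intro e he
  exact Submodule.smul_induction_on he (fun r hr e _ ↦ hIG' r (hI hr) e) fun _ _ ↦ add_mem

end

theorem splits_of_splits_restrictScalars_general
    {K : Type*} [Field K] {𝔞 : Type*} [Ring 𝔞] [Algebra K 𝔞]
    {A : Type*} [Ring A] [Algebra K A] [FiniteDimensional K A]
    (f : 𝔞 →ₐ[K] A)
    (hrad : Submodule.map f.toLinearMap (jacobsonRadical K 𝔞) * (⊤ : Submodule K A) =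
      jacobsonRadical K A)
    (M L E : Type*)
    [AddCommGroup M] [Module A M]
    [AddCommGroup L] [Module A L]
    [IsSemisimpleModule A L]
    [AddCommGroup E] [Module A E]
    (ι : L →ₗ[A] E) (π : E →ₗ[A] M)
    (hinj : Function.Injective ι) (hsurj : Function.Surjective π)
    (hexact : LinearMap.range ι = LinearMap.ker π)
    (hsplit :
      letI : Module 𝔞 E := Module.compHom E f.toRingHom
      letI : Module 𝔞 M := Module.compHom M f.toRingHom
      ∃ σ : M →ₗ[𝔞] E, ∀ m : M, π (σ m) = m) :
    ∃ σ : M →ₗ[A] E, ∀ m : M, π (σ m) = m := by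
  let : Module 𝔞 E := Module.compHom E f.toRingHom
  let : Module 𝔞 M := Module.compHom M f.toRingHom
  obtain ⟨σ, hσ⟩ := hsplit
  have : IsArtinianRing A := .of_finite K A
  have hJ : (Ring.jacobson A).restrictScalars K =
      Submodule.map f.toLinearMap (jacobsonRadical K 𝔞) * ⊤ := by
    rw [hrad, jacobsonRadical, Ideal.jacobson_bot]
  have hsmul : ∀ a ∈ Submodule.map f.toLinearMap (jacobsonRadical K 𝔞), ∀ e : E,
      a • e ∈ σ.toAddMonoidHom.range := by
    rintro _ ⟨x, hx, rfl⟩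
    -- `σ.map_smul x` reads `σ (f x • m) = f x • σ m`: the `𝔞`-actions are `compHom` along `f`.
    refine smul_mem_range_of_mem_annihilator hexact hσ ?_ (σ.map_smul x)
    refine IsSemisimpleModule.jacobson_le_annihilator A L (hJ.ge ?_)
    exact mul_one (f x) ▸ Submodule.mul_mem_mul (Submodule.mem_map_of_mem hx) Submodule.mem_top
  obtain ⟨r, hr⟩ := exists_leftInverse_of_disjoint_jacobson_smul_top hinj <|
    disjoint_range_of_le_range_section hexact hσ <| jacobson_smul_top_le_of_smul_mem hJ.le hsmul
  have hex : Function.Exact ι π := exact_iff.mpr hexact.symm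
  let s := (hex.splitSurjectiveEquiv hinj).symm (hex.splitInjectiveEquiv hsurj ⟨r, hr⟩)
  exact ⟨s.1, LinearMap.congr_fun s.2⟩

/-- Proposition 3.7: let `f : 𝔞 → A` be a homomorphism of finite-dimensional `K`-algebras
such that, regarding `A` as a left `𝔞`-module via `f`, `(rad 𝔞)A = rad A`.  Then for
finite-dimensional `A`-modules `M`, `L` with `L` completely reducible, every short exact
sequence `0 → L → E → M → 0` of `A`-modules which splits after restriction of scalars along
`f` already splits as a sequence of `A`-modules (equivalently, the natural restriction map
`Ext¹_A(M, L) → Ext¹_𝔞(M, L)` is injective). -/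
theorem splits_of_splits_restrictScalars
    {K : Type*} [Field K] {𝔞 : Type*} [Ring 𝔞] [Algebra K 𝔞] [FiniteDimensional K 𝔞]
    {A : Type*} [Ring A] [Algebra K A] [FiniteDimensional K A]
    (f : 𝔞 →ₐ[K] A)
    (hrad : Submodule.map f.toLinearMap (jacobsonRadical K 𝔞) * (⊤ : Submodule K A) =
      jacobsonRadical K A)
    (M L E : Type*)
    [AddCommGroup M] [Module A M] [Module K M] [IsScalarTower K A M] [FiniteDimensional K M]
    [AddCommGroup L] [Module A L] [Module K L] [IsScalarTower K A L] [FiniteDimensional K L]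
    [IsSemisimpleModule A L]
    [AddCommGroup E] [Module A E]
    (ι : L →ₗ[A] E) (π : E →ₗ[A] M)
    (hinj : Function.Injective ι) (hsurj : Function.Surjective π)
    (hexact : LinearMap.range ι = LinearMap.ker π)
    (hsplit :
      letI : Module 𝔞 E := Module.compHom E f.toRingHom
      letI : Module 𝔞 M := Module.compHom M f.toRingHom
      ∃ σ : M →ₗ[𝔞] E, ∀ m : M, π (σ m) = m) :
    ∃ σ : M →ₗ[A] E, ∀ m : M, π (σ m) = m :=
  splits_of_splits_restrictScalars_general f hrad M L E ι π hinj hsurj hexact hsplit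
end

section
/- (Proposition 4.1(a)) Let A be a finite-dimensional K-algebra, P a finite-dimensional projective left A-module, L a completely reducible finite-dimensional A-module, and r ≥ 1 an integer. Then the natural map Ext^1_A(P/rad^r P, L) → Ext^1_A(rad^{r-1}P/rad^r P, L) induced by the inclusion rad^{r-1}P/rad^r P ↪ P/rad^r P is injective. -/
/-!
Lift the quotient map `P → P/rad^r P` through `π : E → P/rad^r P` using projectivity of `P`.
The lift `ψ` need not kill `rad^r P = J · rad^{r-1} P` (`J` the Jacobson radical), but on
`rad^{r-1} P` it differs from the given splitting `φ` of the pullback by a map into `L`.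
For `x ∈ J` and `m ∈ rad^{r-1} P` both pieces of `ψ (x • m) = φ (x • m̄) + x • ℓ` vanish:
`x • m̄ = 0` in `P/rad^r P`, and `J` annihilates the semisimple module `L`.  Hence `ψ` factors
through `P/rad^r P` and splits `π`.
-/

/-- `radPow A M n = rad^n M = (rad A)^n • M`, the `n`-th radical submodule of an `A`-module `M`,
where `rad A` is the Jacobson radical of `A`. -/
def radPow (A : Type*) [Ring A] (M : Type*) [AddCommGroup M] [Module A M] :
    ℕ → Submodule A M
  | 0 => ⊤
  | n + 1 => Submodule.span A
      {z : M | ∃ x ∈ Ideal.jacobson (⊥ : Ideal A), ∃ m ∈ radPow A M n, x • m = z}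

theorem radPow_succ (A : Type*) [Ring A] (M : Type*) [AddCommGroup M] [Module A M] (n : ℕ) :
    radPow A M (n + 1) = Ring.jacobson A • radPow A M n := by
  refine le_antisymm (Submodule.span_le.mpr ?_) (Submodule.smul_le.mpr fun x hx m hm ↦
    Submodule.subset_span ⟨x, Ideal.jacobson_bot (R := A) ▸ hx, m, hm, rfl⟩)
  rintro _ ⟨x, hx, m, hm, rfl⟩
  exact Submodule.smul_mem_smul (Ideal.jacobson_bot (R := A) ▸ hx) hm

section Splitting

variable {A P L E : Type*} [Ring A] [AddCommGroup P] [Module A P] [AddCommGroup L] [Module A L]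
  [AddCommGroup E] [Module A E] {I : Ideal A} {N N' : Submodule A P}
  {ι : L →ₗ[A] E} {π : E →ₗ[A] P ⧸ N'} {φ : N.map N'.mkQ →ₗ[A] E}

theorem smul_le_ker_of_comp_eq_mkQ (hN : I • N ≤ N') (hL : I ≤ Module.annihilator A L)
    (hexact : LinearMap.ker π ≤ LinearMap.range ι) (hφ : π ∘ₗ φ = (N.map N'.mkQ).subtype)
    {ψ : P →ₗ[A] E} (hψ : π ∘ₗ ψ = N'.mkQ) : I • N ≤ LinearMap.ker ψ := by
  refine Submodule.smul_le.mpr fun x hx m hm ↦ ?_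
  let m' : N.map N'.mkQ := ⟨N'.mkQ m, m, hm, rfl⟩
  obtain ⟨l, hl⟩ : ψ m - φ m' ∈ LinearMap.range ι := hexact <| by
    rw [LinearMap.mem_ker, map_sub, ← LinearMap.comp_apply, hψ, ← LinearMap.comp_apply, hφ,
      Submodule.subtype_apply, sub_self]
  have hxm' : x • m' = 0 :=
    Subtype.ext <| (Submodule.Quotient.mk_eq_zero _).mpr <| hN <| Submodule.smul_mem_smul hx hm
  rw [LinearMap.mem_ker, map_smul, ← sub_add_cancel (ψ m) (φ m'), ← hl, smul_add, ← map_smul,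
    ← map_smul, hxm', Module.mem_annihilator.mp (hL hx), map_zero, map_zero, add_zero]

theorem exists_comp_eq_id_of_comp_eq_subtype [Module.Projective A P] (hN : N' = I • N)
    (hL : I ≤ Module.annihilator A L) (hπ : Function.Surjective π)
    (hexact : LinearMap.ker π ≤ LinearMap.range ι) (hφ : π ∘ₗ φ = (N.map N'.mkQ).subtype) :
    ∃ σ : (P ⧸ N') →ₗ[A] E, π ∘ₗ σ = LinearMap.id := by
  obtain ⟨ψ, hψ⟩ := Module.projective_lifting_property π N'.mkQ hπ
  have hker : N' ≤ LinearMap.ker ψ := hN.le.trans (smul_le_ker_of_comp_eq_mkQ hN.ge hL hexact hφ hψ)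
  refine ⟨N'.liftQ ψ hker, Submodule.linearMap_qext _ ?_⟩
  rw [LinearMap.comp_assoc, Submodule.liftQ_mkQ, hψ, LinearMap.id_comp]

end Splitting

theorem ext_injective_of_radical_quotient_general
    {A : Type*} [Ring A]
    (P : Type*) [AddCommGroup P] [Module A P] [Module.Projective A P]
    (L : Type*) [AddCommGroup L] [Module A L] [IsSemisimpleModule A L]
    (r : ℕ) (hr : 1 ≤ r)
    (E : Type*) [AddCommGroup E] [Module A E]
    (ι : L →ₗ[A] E) (π : E →ₗ[A] (P ⧸ radPow A P r))
    (hsurj : Function.Surjective π)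
    (hexact : LinearMap.range ι = LinearMap.ker π)
    (hpullback : ∃ φ : (Submodule.map (radPow A P r).mkQ (radPow A P (r - 1))) →ₗ[A] E,
      ∀ x : (Submodule.map (radPow A P r).mkQ (radPow A P (r - 1))),
        π (φ x) = (x : P ⧸ radPow A P r)) :
    ∃ σ : (P ⧸ radPow A P r) →ₗ[A] E, ∀ y : P ⧸ radPow A P r, π (σ y) = y := by
  obtain ⟨n, rfl⟩ : ∃ n, r = n + 1 := Nat.exists_eq_add_of_le' hr
  obtain ⟨φ, hφ⟩ := hpullback
  obtain ⟨σ, hσ⟩ := exists_comp_eq_id_of_comp_eq_subtype (N := radPow A P n) (radPow_succ A P n)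
    (IsSemisimpleModule.jacobson_le_annihilator A L) hsurj hexact.ge (LinearMap.ext hφ)
  exact ⟨σ, LinearMap.congr_fun hσ⟩

/-- Proposition 4.1(a): for a finite-dimensional `K`-algebra `A`, a finite-dimensional
projective `A`-module `P`, a completely reducible finite-dimensional `A`-module `L` and `r ≥ 1`,
the natural map `Ext¹_A(P/rad^r P, L) → Ext¹_A(rad^{r-1}P/rad^r P, L)` induced by the inclusion
`rad^{r-1}P/rad^r P ↪ P/rad^r P` is injective.  Equivalently (injectivity = trivial kernel):
every extension `0 → L → E → P/rad^r P → 0` whose pullback along the inclusion splits (i.e. the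
inclusion lifts through `E`) is itself split. -/
theorem ext_injective_of_radical_quotient
    {K : Type*} [Field K] {A : Type*} [Ring A] [Algebra K A] [FiniteDimensional K A]
    (P : Type*) [AddCommGroup P] [Module A P] [Module K P] [IsScalarTower K A P]
    [FiniteDimensional K P] [Module.Projective A P]
    (L : Type*) [AddCommGroup L] [Module A L] [Module K L] [IsScalarTower K A L]
    [FiniteDimensional K L] [IsSemisimpleModule A L]
    (r : ℕ) (hr : 1 ≤ r)
    (E : Type*) [AddCommGroup E] [Module A E]
    (ι : L →ₗ[A] E) (π : E →ₗ[A] (P ⧸ radPow A P r))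
    (hinj : Function.Injective ι) (hsurj : Function.Surjective π)
    (hexact : LinearMap.range ι = LinearMap.ker π)
    (hpullback : ∃ φ : (Submodule.map (radPow A P r).mkQ (radPow A P (r - 1))) →ₗ[A] E,
      ∀ x : (Submodule.map (radPow A P r).mkQ (radPow A P (r - 1))),
        π (φ x) = (x : P ⧸ radPow A P r)) :
    ∃ σ : (P ⧸ radPow A P r) →ₗ[A] E, ∀ y : P ⧸ radPow A P r, π (σ y) = y :=
  ext_injective_of_radical_quotient_general P L r hr E ι π hsurj hexact hpullback
end

section
/- Let A be a finite-dimensional K-algebra, P a finite-dimensional projective left A-module, L a completely reducible finite-dimensional A-module, and r ≥ 1 an integer. Then the connecting homomorphism Hom_A(rad^{r-1}P/rad^r P, L) → Ext^1_A(P/rad^{r-1}P, L) arising from the short exact sequence 0 → rad^{r-1}P/rad^r P → P/rad^r P → P/rad^{r-1}P → 0 is surjective. -/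
theorem radPow_succ_le_ker {A M N L : Type*} [Ring A] [AddCommGroup M] [Module A M]
    [AddCommGroup N] [Module A N] [AddCommGroup L] [Module A L] [IsSemisimpleModule A L]
    {n : ℕ} (g : M →ₗ[A] N) (ι : L →ₗ[A] N)
    (hg : (radPow A M n).map g ≤ LinearMap.range ι) :
    radPow A M (n + 1) ≤ LinearMap.ker g := by
  rw [radPow, Submodule.span_le]
  rintro _ ⟨x, hx, m, hm, rfl⟩
  obtain ⟨l, hl⟩ := hg (Submodule.mem_map_of_mem hm)
  have hxl : x • l = 0 := Module.mem_annihilator.mp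
    (IsSemisimpleModule.jacobson_le_annihilator A L (Ideal.jacobson_bot (R := A) ▸ hx)) l
  simp [← hl, ← map_smul, hxl]

theorem connecting_hom_surjective_general
    {A : Type*} [Ring A]
    (P : Type*) [AddCommGroup P] [Module A P] [Module.Projective A P]
    (L : Type*) [AddCommGroup L] [Module A L] [IsSemisimpleModule A L]
    (r : ℕ) (hr : 1 ≤ r)
    (E : Type*) [AddCommGroup E] [Module A E]
    (ι : L →ₗ[A] E) (π : E →ₗ[A] (P ⧸ radPow A P (r - 1)))
    (hsurj : Function.Surjective π)
    (hexact : LinearMap.range ι = LinearMap.ker π) :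
    ∃ h : (P ⧸ radPow A P r) →ₗ[A] E,
      ∀ x : P, π (h (Submodule.Quotient.mk x)) =
        (Submodule.Quotient.mk x : P ⧸ radPow A P (r - 1)) := by
  obtain ⟨n, rfl⟩ := Nat.exists_eq_add_of_le' hr
  obtain ⟨g, hg⟩ := Module.projective_lifting_property π (radPow A P n).mkQ hsurj
  have hker : radPow A P (n + 1) ≤ LinearMap.ker g := by
    refine radPow_succ_le_ker g ι ?_
    rintro _ ⟨m, hm, rfl⟩
    rw [hexact, LinearMap.mem_ker, ← LinearMap.comp_apply, hg]
    simpa using hm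
  exact ⟨(radPow A P (n + 1)).liftQ g hker, LinearMap.congr_fun hg⟩

/-- For a finite-dimensional `K`-algebra `A`, a finite-dimensional projective `A`-module `P`,
a completely reducible finite-dimensional `A`-module `L` and `r ≥ 1`, the connecting
homomorphism `Hom_A(rad^{r-1}P/rad^r P, L) → Ext¹_A(P/rad^{r-1}P, L)` arising from the short
exact sequence `0 → rad^{r-1}P/rad^r P → P/rad^r P → P/rad^{r-1}P → 0` is surjective.
Equivalently (by the pushout description of the connecting map): for every extension
`0 → L → E →π P/rad^{r-1}P → 0` there exists `h : P/rad^r P →ₗ[A] E` lifting the canonical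
projection `P/rad^r P → P/rad^{r-1}P` through `π`. -/
theorem connecting_hom_surjective
    {K : Type*} [Field K] {A : Type*} [Ring A] [Algebra K A] [FiniteDimensional K A]
    (P : Type*) [AddCommGroup P] [Module A P] [Module K P] [IsScalarTower K A P]
    [FiniteDimensional K P] [Module.Projective A P]
    (L : Type*) [AddCommGroup L] [Module A L] [Module K L] [IsScalarTower K A L]
    [FiniteDimensional K L] [IsSemisimpleModule A L]
    (r : ℕ) (hr : 1 ≤ r)
    (E : Type*) [AddCommGroup E] [Module A E]
    (ι : L →ₗ[A] E) (π : E →ₗ[A] (P ⧸ radPow A P (r - 1)))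
    (hinj : Function.Injective ι) (hsurj : Function.Surjective π)
    (hexact : LinearMap.range ι = LinearMap.ker π) :
    ∃ h : (P ⧸ radPow A P r) →ₗ[A] E,
      ∀ x : P, π (h (Submodule.Quotient.mk x)) =
        (Submodule.Quotient.mk x : P ⧸ radPow A P (r - 1)) :=
  connecting_hom_surjective_general P L r hr E ι π hsurj hexact
end

section
/- (Corollary 2.2) Let 𝔞 = ⊕_{n≥0} 𝔞_n be a finite-dimensional tightly graded K-algebra, and let M = ⊕_n M_n and M' = ⊕_n M'_n be finite-dimensional graded 𝔞-modules, each generated in grade 0. If M and M' are isomorphic as ungraded 𝔞-modules, then there exists an 𝔞-module isomorphism M → M' carrying M_n onto M'_n for every n (i.e. M ≅ M' as graded 𝔞-modules). -/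
/-!
Because `𝔞` is graded in nonnegative degrees, taking degree-zero components is multiplicative:
`(a • m)₀ = a₀ • m₀`. The degree-zero part `f₀ x = ∑ₙ (f xₙ)ₙ` of an `𝔞`-linear map `f` is again
`𝔞`-linear, and when the source is generated in degree zero this multiplicativity propagates the
identity `(f x)₀ = f₀ x₀` from generators to all `x`. Applied to an isomorphism `e` and its inverse,
it shows that `e₀ ∘ (e⁻¹)₀` fixes `M'₀`, hence is the identity, and symmetrically; so `e₀` is a
graded isomorphism.
-/

open DirectSum

namespace GradedModule

variable {ι A M N σA σM σN : Type*} [DecidableEq ι]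
  [Semiring A] [SetLike σA A] (𝒜 : ι → σA)
  [AddCommMonoid M] [Module A M] [SetLike σM M] [AddSubmonoidClass σM M] (ℳ : ι → σM)
  [Decomposition ℳ]
  [AddCommMonoid N] [Module A N] [SetLike σN N] [AddSubmonoidClass σN N] (𝒩 : ι → σN)
  [Decomposition 𝒩]

theorem coe_decompose_smul_add_of_left_mem [AddLeftCancelMonoid ι] [SetLike.GradedSMul 𝒜 ℳ]
    {i j : ι} {a : A} (ha : a ∈ 𝒜 i) (y : M) :
    (decompose ℳ (a • y) (i + j) : M) = a • (decompose ℳ y j : M) := by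
  induction y using DirectSum.Decomposition.inductionOn ℳ with
  | zero => simp
  | @homogeneous k m =>
    obtain ⟨m, hm⟩ := m
    have ham : a • m ∈ ℳ (i + k) := SetLike.GradedSMul.smul_mem ha hm
    by_cases hkj : k = j
    · subst hkj
      rw [decompose_of_mem_same ℳ hm, decompose_of_mem_same ℳ ham]
    · rw [decompose_of_mem_ne ℳ hm hkj, decompose_of_mem_ne ℳ ham (by simpa using hkj),
        smul_zero]
  | add u v hu hv =>
    simp only [smul_add, decompose_add, DirectSum.add_apply, AddMemClass.coe_add, hu, hv]

theorem coe_decompose_smul_zero [AddCommMonoid ι] [PartialOrder ι] [CanonicallyOrderedAdd ι]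
    [AddSubmonoidClass σA A] [GradedRing 𝒜] [SetLike.GradedSMul 𝒜 ℳ] (a : A) (y : M) :
    (decompose ℳ (a • y) 0 : M) = (decompose 𝒜 a 0 : A) • (decompose ℳ y 0 : M) := by
  induction a using DirectSum.Decomposition.inductionOn 𝒜 with
  | zero => simp
  | @homogeneous i a =>
    obtain ⟨a, ha⟩ := a
    induction y using DirectSum.Decomposition.inductionOn ℳ with
    | zero => simp
    | @homogeneous j m =>
      obtain ⟨m, hm⟩ := m
      have ham : a • m ∈ ℳ (i + j) := SetLike.GradedSMul.smul_mem ha hm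
      by_cases hij : i + j = 0
      · obtain ⟨rfl, rfl⟩ := add_eq_zero.mp hij
        simp only [decompose_of_mem_same _ ha, decompose_of_mem_same _ hm]
        exact decompose_of_mem_same ℳ (by simpa using ham)
      · rw [decompose_of_mem_ne ℳ ham hij]
        rcases not_and_or.mp (mt add_eq_zero.mpr hij) with hi | hj
        · simp [decompose_of_mem_ne 𝒜 ha hi]
        · simp [decompose_of_mem_ne ℳ hm hj]
    | add u v hu hv =>
      simp only [smul_add, decompose_add, DirectSum.add_apply, AddMemClass.coe_add, hu, hv]
  | add a b ha hb =>
    simp only [add_smul, decompose_add, DirectSum.add_apply, AddMemClass.coe_add, ha, hb]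

def degreeZeroAddHom (f : M →+ N) : M →+ N :=
  (toAddMonoid fun i ↦
    { toFun (x : ℳ i) := (decompose 𝒩 (f x) i : N)
      map_zero' := by simp
      map_add' x y := by simp }).comp (decomposeAddEquiv ℳ).toAddMonoidHom

variable {ℳ 𝒩} in
theorem degreeZeroAddHom_apply_of_mem (f : M →+ N) {i : ι} {x : M} (hx : x ∈ ℳ i) :
    degreeZeroAddHom ℳ 𝒩 f x = decompose 𝒩 (f x) i := by
  simp [degreeZeroAddHom, decompose_of_mem ℳ hx]

variable [AddCancelCommMonoid ι] [AddSubmonoidClass σA A] [GradedRing 𝒜]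
  [SetLike.GradedSMul 𝒜 ℳ] [SetLike.GradedSMul 𝒜 𝒩]

def degreeZero (f : M →ₗ[A] N) : M →ₗ[A] N where
  __ := degreeZeroAddHom ℳ 𝒩 f
  map_smul' a x := by
    induction a using DirectSum.Decomposition.inductionOn 𝒜 with
    | zero => simp
    | @homogeneous i a =>
      induction x using DirectSum.Decomposition.inductionOn ℳ with
      | zero => simp
      | @homogeneous j m =>
        have ham : (a : A) • (m : M) ∈ ℳ (i + j) := SetLike.GradedSMul.smul_mem a.2 m.2
        simp only [AddMonoidHom.toFun_eq_coe, RingHom.id_apply,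
          degreeZeroAddHom_apply_of_mem _ ham, degreeZeroAddHom_apply_of_mem _ m.2]
        rw [AddMonoidHom.coe_coe, map_smul, coe_decompose_smul_add_of_left_mem 𝒜 𝒩 a.2]
      | add u v hu hv => simp_all
    | add a b ha hb => simp_all [add_smul]

variable {ℳ 𝒩}

theorem degreeZero_apply_of_mem (f : M →ₗ[A] N) {i : ι} {x : M} (hx : x ∈ ℳ i) :
    degreeZero 𝒜 ℳ 𝒩 f x = decompose 𝒩 (f x) i :=
  degreeZeroAddHom_apply_of_mem (f : M →+ N) hx

theorem degreeZero_apply_mem (f : M →ₗ[A] N) {i : ι} {x : M} (hx : x ∈ ℳ i) :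
    degreeZero 𝒜 ℳ 𝒩 f x ∈ 𝒩 i := by
  rw [degreeZero_apply_of_mem 𝒜 f hx]; exact SetLike.coe_mem _

variable [PartialOrder ι] [CanonicallyOrderedAdd ι]

theorem coe_decompose_apply_zero_eq_degreeZero (hℳ : Submodule.span A (ℳ 0 : Set M) = ⊤)
    (f : M →ₗ[A] N) (x : M) :
    (decompose 𝒩 (f x) 0 : N) = degreeZero 𝒜 ℳ 𝒩 f (decompose ℳ x 0) := by
  induction (hℳ ▸ Submodule.mem_top : x ∈ Submodule.span A (ℳ 0 : Set M)) using
    Submodule.span_induction with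
  | mem x hx => rw [decompose_of_mem_same ℳ hx, degreeZero_apply_of_mem 𝒜 f hx]
  | zero => simp
  | add x y _ _ hx hy =>
    simp only [map_add, decompose_add, DirectSum.add_apply, AddMemClass.coe_add, hx, hy]
  | smul a x _ hx =>
    rw [map_smul, coe_decompose_smul_zero 𝒜 𝒩, hx, ← map_smul, ← coe_decompose_smul_zero 𝒜 ℳ]

theorem degreeZero_comp_degreeZero_eq_id (hℳ : Submodule.span A (ℳ 0 : Set M) = ⊤)
    (h𝒩 : Submodule.span A (𝒩 0 : Set N) = ⊤) {f : M →ₗ[A] N} {g : N →ₗ[A] M}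
    (hfg : f ∘ₗ g = LinearMap.id) :
    degreeZero 𝒜 ℳ 𝒩 f ∘ₗ degreeZero 𝒜 𝒩 ℳ g = LinearMap.id := by
  refine LinearMap.ext_on h𝒩 fun y hy ↦ ?_
  rw [LinearMap.comp_apply, degreeZero_apply_of_mem 𝒜 g hy,
    ← coe_decompose_apply_zero_eq_degreeZero 𝒜 hℳ, ← LinearMap.comp_apply, hfg,
    LinearMap.id_apply, decompose_of_mem_same 𝒩 hy]

def degreeZeroEquiv (hℳ : Submodule.span A (ℳ 0 : Set M) = ⊤)
    (h𝒩 : Submodule.span A (𝒩 0 : Set N) = ⊤) (e : M ≃ₗ[A] N) : M ≃ₗ[A] N :=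
  .ofLinearMap (degreeZero 𝒜 ℳ 𝒩 e) (degreeZero 𝒜 𝒩 ℳ e.symm)
    (degreeZero_comp_degreeZero_eq_id 𝒜 hℳ h𝒩 e.comp_symm)
    (degreeZero_comp_degreeZero_eq_id 𝒜 h𝒩 hℳ e.symm_comp)

theorem degreeZeroEquiv_symm_apply_mem_iff (hℳ : Submodule.span A (ℳ 0 : Set M) = ⊤)
    (h𝒩 : Submodule.span A (𝒩 0 : Set N) = ⊤) (e : M ≃ₗ[A] N) {i : ι} {y : N} :
    (degreeZeroEquiv 𝒜 hℳ h𝒩 e).symm y ∈ ℳ i ↔ y ∈ 𝒩 i :=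
  ⟨fun h ↦ (degreeZeroEquiv 𝒜 hℳ h𝒩 e).apply_symm_apply y ▸ degreeZero_apply_mem 𝒜 _ h,
    degreeZero_apply_mem 𝒜 _⟩

end GradedModule

theorem graded_iso_of_ungraded_iso_general
    {K : Type*} [Field K] {𝔞 : Type*} [Ring 𝔞] [Algebra K 𝔞]
    (𝒜 : ℕ → Submodule K 𝔞) [GradedAlgebra 𝒜]
    (M : Type*) [AddCommGroup M] [Module 𝔞 M] [Module K M] [IsScalarTower K 𝔞 M]
    (ℳ : ℕ → Submodule K M) [DirectSum.Decomposition ℳ]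
    (hact : ∀ i j : ℕ, ∀ a ∈ 𝒜 i, ∀ m ∈ ℳ j, a • m ∈ ℳ (i + j))
    (hgen : Submodule.span 𝔞 ((ℳ 0 : Set M)) = ⊤)
    (M' : Type*) [AddCommGroup M'] [Module 𝔞 M'] [Module K M'] [IsScalarTower K 𝔞 M']
    (ℳ' : ℕ → Submodule K M') [DirectSum.Decomposition ℳ']
    (hact' : ∀ i j : ℕ, ∀ a ∈ 𝒜 i, ∀ m ∈ ℳ' j, a • m ∈ ℳ' (i + j))
    (hgen' : Submodule.span 𝔞 ((ℳ' 0 : Set M')) = ⊤)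
    (hiso : Nonempty (M ≃ₗ[𝔞] M')) :
    ∃ g : M ≃ₗ[𝔞] M', ∀ n : ℕ,
      Submodule.map ((g.restrictScalars K : M ≃ₗ[K] M') : M →ₗ[K] M') (ℳ n) = ℳ' n := by
  have : SetLike.GradedSMul 𝒜 ℳ := ⟨fun _ _ _ _ ha hm ↦ hact _ _ _ ha _ hm⟩
  have : SetLike.GradedSMul 𝒜 ℳ' := ⟨fun _ _ _ _ ha hm ↦ hact' _ _ _ ha _ hm⟩
  obtain ⟨e⟩ := hiso
  refine ⟨GradedModule.degreeZeroEquiv 𝒜 hgen hgen' e, fun n ↦ SetLike.ext fun y ↦ ?_⟩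
  rw [Submodule.mem_map_equiv]
  exact GradedModule.degreeZeroEquiv_symm_apply_mem_iff 𝒜 hgen hgen' e

/-- Corollary 2.2: let `𝔞 = ⊕_{n≥0} 𝔞_n` be a finite-dimensional tightly graded `K`-algebra
(`𝔞_0` semisimple, `𝔞_n = 𝔞_1^n` for `n ≥ 1`), and let `M = ⊕_n M_n`, `M' = ⊕_n M'_n` be
finite-dimensional graded `𝔞`-modules, each generated in grade 0.  If `M ≅ M'` as ungraded
`𝔞`-modules, then there is an `𝔞`-module isomorphism `M ≃ M'` carrying `M_n` onto `M'_n` for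
every `n`, i.e. `M ≅ M'` as graded `𝔞`-modules. -/
theorem graded_iso_of_ungraded_iso
    {K : Type*} [Field K] {𝔞 : Type*} [Ring 𝔞] [Algebra K 𝔞] [FiniteDimensional K 𝔞]
    (𝒜 : ℕ → Submodule K 𝔞) [GradedAlgebra 𝒜]
    (𝔞₀ : Subalgebra K 𝔞) (h𝔞₀ : Subalgebra.toSubmodule 𝔞₀ = 𝒜 0)
    (hss : IsSemisimpleRing 𝔞₀)
    (htight : ∀ n : ℕ, 1 ≤ n → 𝒜 n = 𝒜 1 ^ n)
    (M : Type*) [AddCommGroup M] [Module 𝔞 M] [Module K M] [IsScalarTower K 𝔞 M]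
    [FiniteDimensional K M]
    (ℳ : ℕ → Submodule K M) [DirectSum.Decomposition ℳ]
    (hact : ∀ i j : ℕ, ∀ a ∈ 𝒜 i, ∀ m ∈ ℳ j, a • m ∈ ℳ (i + j))
    (hgen : Submodule.span 𝔞 ((ℳ 0 : Set M)) = ⊤)
    (M' : Type*) [AddCommGroup M'] [Module 𝔞 M'] [Module K M'] [IsScalarTower K 𝔞 M']
    [FiniteDimensional K M']
    (ℳ' : ℕ → Submodule K M') [DirectSum.Decomposition ℳ']
    (hact' : ∀ i j : ℕ, ∀ a ∈ 𝒜 i, ∀ m ∈ ℳ' j, a • m ∈ ℳ' (i + j))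
    (hgen' : Submodule.span 𝔞 ((ℳ' 0 : Set M')) = ⊤)
    (hiso : Nonempty (M ≃ₗ[𝔞] M')) :
    ∃ g : M ≃ₗ[𝔞] M', ∀ n : ℕ,
      Submodule.map ((g.restrictScalars K : M ≃ₗ[K] M') : M →ₗ[K] M') (ℳ n) = ℳ' n :=
  graded_iso_of_ungraded_iso_general 𝒜 M ℳ hact hgen M' ℳ' hact' hgen' hiso
end

section
/- Let A = ⊕_{n≥0} A_n be a finite-dimensional tightly graded K-algebra. Let E be a finite-dimensional graded A-module and S ⊆ E a graded submodule such that S is a simple A-module concentrated in the single grade s and E/S is a simple A-module concentrated in the single grade 0. If s ≠ 1, then S has a graded complement in E: there is a graded A-submodule T ⊆ E with E = S ⊕ T. (Graded extensions between irreducible modules over a tightly graded algebra split unless the grades differ by 1.) -/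
/-!
Because `S ⊆ E_s` and `E_n ⊆ S` for `n ≠ 0`, the grading of `E` lives in degrees `0` and `s`;
in particular `E_1 = 0` as `s ≠ 1`. By tightness every element of positive degree is a sum of
products ending in a degree-one element, so it kills `E_0`, and `A` acts on `E_0` through `A_0`.
If `s ≠ 0`, then `E_0` is an `A`-submodule complementary to `S = E_s`. If `s = 0`, then
`E = E_0`, whose `A`-submodules are exactly its `A_0`-submodules, and `A_0` is semisimple.
-/

open DirectSum

theorem eq_iSup_inf_of_le {α ι : Type*} [CompleteLattice α] {p : α} {f : ι → α} {i : ι}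
    (h : p ≤ f i) : p = ⨆ n, p ⊓ f n :=
  le_antisymm ((inf_eq_left.2 h).ge.trans (le_iSup (fun n ↦ p ⊓ f n) i))
    (iSup_le fun _ ↦ inf_le_left)

namespace Submodule

variable {S A E : Type*} [Semiring S] [Semiring A] [AddCommMonoid E] [Module S E] [Module A E]
  [SMul S A] [IsScalarTower S A E]

def ofSMulMem (N : Submodule S E) (h : ∀ (a : A), ∀ x ∈ N, a • x ∈ N) : Submodule A E where
  carrier := N
  add_mem' := N.add_mem
  zero_mem' := N.zero_mem
  smul_mem' := h

end Submodule

theorem IsSemisimpleModule.of_forall_exists_smul_eq (S : Type*) {A E : Type*} [Ring S] [Ring A]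
    [AddCommGroup E] [Module S E] [Module A E] [SMul S A] [IsScalarTower S A E]
    [IsSemisimpleModule S E] (h : ∀ (a : A) (x : E), ∃ b : S, a • x = b • x) :
    IsSemisimpleModule A E where
  exists_isCompl N := by
    obtain ⟨T, hT⟩ := exists_isCompl (N.restrictScalars S)
    have hT_smul (a : A) (x : E) (hx : x ∈ T) : a • x ∈ T := by
      obtain ⟨b, hb⟩ := h a x
      exact hb ▸ T.smul_mem b hx
    exact ⟨T.ofSMulMem hT_smul, (Submodule.isCompl_restrictScalars_iff S).1 hT⟩

theorem smul_eq_zero_of_mem_pow {K A E : Type*} [CommSemiring K] [Semiring A] [Algebra K A]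
    [AddCommMonoid E] [Module A E] {P : Submodule K A} {x : E} (hP : ∀ c ∈ P, c • x = 0)
    {n : ℕ} (hn : n ≠ 0) {a : A} (ha : a ∈ P ^ n) : a • x = 0 := by
  obtain ⟨k, rfl⟩ := Nat.exists_eq_succ_of_ne_zero hn
  rw [pow_succ] at ha
  exact Submodule.mul_induction_on ha (fun b _ c hc ↦ by rw [mul_smul, hP c hc, smul_zero])
    fun y z hy hz ↦ by rw [add_smul, hy, hz, add_zero]

namespace DirectSum.Decomposition

variable {ι K E : Type*} [DecidableEq ι] [Ring K] [AddCommGroup E] [Module K E]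
  (ℰ : ι → Submodule K E) [Decomposition ℰ]

theorem eq_bot_of_le_of_ne {m n : ι} (hmn : m ≠ n) (h : ℰ m ≤ ℰ n) : ℰ m = ⊥ :=
  ((Decomposition.isInternal ℰ).submodule_iSupIndep.pairwiseDisjoint hmn).eq_bot_of_le h

theorem isCompl_of_forall_ne_le {N : Submodule K E} {i j : ι} (hij : i ≠ j) (hN : N ≤ ℰ i)
    (h : ∀ n, n ≠ j → ℰ n ≤ N) : IsCompl N (ℰ j) := by
  have hℰ := Decomposition.isInternal ℰ
  refine ⟨(hℰ.submodule_iSupIndep.pairwiseDisjoint hij).mono_left hN, ?_⟩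
  rw [codisjoint_iff, eq_top_iff, ← hℰ.submodule_iSup_eq_top]
  refine iSup_le fun n ↦ ?_
  by_cases hn : n = j
  · exact hn ▸ le_sup_right
  · exact le_sup_of_le_left (h n hn)

theorem eq_top_of_forall_ne_eq_bot {j : ι} (h : ∀ n, n ≠ j → ℰ n = ⊥) : ℰ j = ⊤ := by
  rw [eq_top_iff, ← (Decomposition.isInternal ℰ).submodule_iSup_eq_top]
  refine iSup_le fun n ↦ ?_
  by_cases hn : n = j
  · exact hn ▸ le_rfl
  · simp [h n hn]

end DirectSum.Decomposition

section GradedAction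

variable {K A E : Type*} [CommRing K] [Ring A] [Algebra K A] [AddCommGroup E] [Module A E]
  [Module K E] {𝒜 : ℤ → Submodule K A} {ℰ : ℤ → Submodule K E}

theorem smul_eq_zero_of_mem_grade_ne_zero (hneg : ∀ n : ℤ, n < 0 → 𝒜 n = ⊥)
    (htight : ∀ n : ℕ, 1 ≤ n → 𝒜 (n : ℤ) = 𝒜 1 ^ n)
    (hact : ∀ i j : ℤ, ∀ a ∈ 𝒜 i, ∀ m ∈ ℰ j, a • m ∈ ℰ (i + j)) (hℰ₁ : ℰ 1 = ⊥)
    {n : ℤ} (hn : n ≠ 0) {a : A} (ha : a ∈ 𝒜 n) {x : E} (hx : x ∈ ℰ 0) : a • x = 0 := by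
  rcases hn.lt_or_gt with hn | hn
  · rw [hneg n hn, Submodule.mem_bot] at ha
    rw [ha, zero_smul]
  · lift n to ℕ using hn.le
    rw [htight n (by omega)] at ha
    refine smul_eq_zero_of_mem_pow (fun c hc ↦ ?_) (by omega) ha
    simpa [hℰ₁] using hact 1 0 c hc x hx

variable [GradedAlgebra 𝒜]

theorem smul_eq_decompose_zero_smul
    (h : ∀ {n : ℤ}, n ≠ 0 → ∀ {a : A}, a ∈ 𝒜 n → ∀ {x : E}, x ∈ ℰ 0 → a • x = 0)
    (a : A) {x : E} (hx : x ∈ ℰ 0) : a • x = (decompose 𝒜 a 0 : A) • x := by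
  induction a using Decomposition.inductionOn 𝒜 with
  | zero => simp
  | @homogeneous i a =>
    by_cases hi : i = 0
    · subst hi
      rw [decompose_coe, of_eq_same]
    · rw [h hi a.2 hx, decompose_of_mem_ne 𝒜 a.2 hi, zero_smul]
  | add a b ha hb =>
    rw [add_smul, ha, hb, decompose_add, DirectSum.add_apply, Submodule.coe_add, add_smul]

end GradedAction

theorem graded_extension_splits_of_grade_ne_one_general
    {K : Type*} [Field K] {A : Type*} [Ring A] [Algebra K A]
    (𝒜 : ℤ → Submodule K A) [GradedAlgebra 𝒜]
    (hneg : ∀ n : ℤ, n < 0 → 𝒜 n = ⊥)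
    (A₀ : Subalgebra K A) (hA₀ : Subalgebra.toSubmodule A₀ = 𝒜 0)
    (hss : IsSemisimpleRing A₀)
    (htight : ∀ n : ℕ, 1 ≤ n → 𝒜 (n : ℤ) = 𝒜 1 ^ n)
    (E : Type*) [AddCommGroup E] [Module A E] [Module K E] [IsScalarTower K A E]
    (ℰ : ℤ → Submodule K E) [DirectSum.Decomposition ℰ]
    (hact : ∀ i j : ℤ, ∀ a ∈ 𝒜 i, ∀ m ∈ ℰ j, a • m ∈ ℰ (i + j))
    (s : ℤ) (hs : s ≠ 1)
    (S : Submodule A E)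
    (hSgrade : S.restrictScalars K ≤ ℰ s)
    (hQgrade : ∀ n : ℤ, n ≠ 0 → ℰ n ≤ S.restrictScalars K) :
    ∃ T : Submodule A E,
      (T.restrictScalars K = ⨆ n : ℤ, T.restrictScalars K ⊓ ℰ n) ∧
      S ⊓ T = ⊥ ∧ S ⊔ T = ⊤ := by
  have hℰ₁ : ℰ 1 = ⊥ :=
    Decomposition.eq_bot_of_le_of_ne ℰ hs.symm ((hQgrade 1 one_ne_zero).trans hSgrade)
  have hsmul :=
    smul_eq_decompose_zero_smul (smul_eq_zero_of_mem_grade_ne_zero hneg htight hact hℰ₁)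
  obtain ⟨T, hT, hST⟩ : ∃ T : Submodule A E, T.restrictScalars K ≤ ℰ 0 ∧ IsCompl S T := by
    by_cases hs₀ : s = 0
    · subst hs₀
      have hℰ₀ : ℰ 0 = ⊤ := Decomposition.eq_top_of_forall_ne_eq_bot ℰ fun n hn ↦
        Decomposition.eq_bot_of_le_of_ne ℰ hn ((hQgrade n hn).trans hSgrade)
      have hdecompose_mem (a : A) : (decompose 𝒜 a 0 : A) ∈ A₀ :=
        A₀.mem_toSubmodule.1 (hA₀.symm ▸ (decompose 𝒜 a 0).2)
      have : IsSemisimpleModule A E := .of_forall_exists_smul_eq A₀ fun a x ↦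
        ⟨⟨_, hdecompose_mem a⟩, hsmul a (hℰ₀ ▸ Submodule.mem_top)⟩
      obtain ⟨T, hT⟩ := exists_isCompl S
      exact ⟨T, hℰ₀ ▸ le_top, hT⟩
    · have hsmul_mem (a : A) (x : E) (hx : x ∈ ℰ 0) : a • x ∈ ℰ 0 :=
        hsmul a hx ▸ hact 0 0 _ (decompose 𝒜 a 0).2 x hx
      refine ⟨(ℰ 0).ofSMulMem hsmul_mem, le_rfl, (Submodule.isCompl_restrictScalars_iff K).1 ?_⟩
      exact Decomposition.isCompl_of_forall_ne_le ℰ hs₀ hSgrade hQgrade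
  exact ⟨T, eq_iSup_inf_of_le hT, hST.inf_eq_bot, hST.sup_eq_top⟩

/-- Let `A = ⊕_{n≥0} A_n` be a finite-dimensional tightly graded `K`-algebra (here graded by
`ℤ` with vanishing negative part: `A_0` is semisimple and `A_n = A_1^n` for `n ≥ 1`).  Let `E`
be a finite-dimensional graded `A`-module and `S ⊆ E` a (necessarily graded) submodule which is
simple and concentrated in the single grade `s` (i.e. `S ⊆ E_s`), such that `E/S` is simple and
concentrated in grade `0` (i.e. `E_n ⊆ S` for all `n ≠ 0`).  If `s ≠ 1` then `S` has a graded
complement: there is a graded `A`-submodule `T` of `E` with `E = S ⊕ T`.  (Graded extensions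
between irreducible modules over a tightly graded algebra split unless the grades differ
by 1.) -/
theorem graded_extension_splits_of_grade_ne_one
    {K : Type*} [Field K] {A : Type*} [Ring A] [Algebra K A] [FiniteDimensional K A]
    (𝒜 : ℤ → Submodule K A) [GradedAlgebra 𝒜]
    (hneg : ∀ n : ℤ, n < 0 → 𝒜 n = ⊥)
    (A₀ : Subalgebra K A) (hA₀ : Subalgebra.toSubmodule A₀ = 𝒜 0)
    (hss : IsSemisimpleRing A₀)
    (htight : ∀ n : ℕ, 1 ≤ n → 𝒜 (n : ℤ) = 𝒜 1 ^ n)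
    (E : Type*) [AddCommGroup E] [Module A E] [Module K E] [IsScalarTower K A E]
    [FiniteDimensional K E]
    (ℰ : ℤ → Submodule K E) [DirectSum.Decomposition ℰ]
    (hact : ∀ i j : ℤ, ∀ a ∈ 𝒜 i, ∀ m ∈ ℰ j, a • m ∈ ℰ (i + j))
    (s : ℤ) (hs : s ≠ 1)
    (S : Submodule A E) [IsSimpleModule A S] [IsSimpleModule A (E ⧸ S)]
    (hSgrade : S.restrictScalars K ≤ ℰ s)
    (hQgrade : ∀ n : ℤ, n ≠ 0 → ℰ n ≤ S.restrictScalars K) :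
    ∃ T : Submodule A E,
      (T.restrictScalars K = ⨆ n : ℤ, T.restrictScalars K ⊓ ℰ n) ∧
      S ⊓ T = ⊥ ∧ S ⊔ T = ⊤ :=
  graded_extension_splits_of_grade_ne_one_general 𝒜 hneg A₀ hA₀ hss htight E ℰ hact s hs S hSgrade
    hQgrade
end

section
/- (Lemma 6.2) Fix an integer r > 0. Let M be a finite-dimensional A-module equipped with an 𝔞-grading M = ⊕_{i≥0} M_i such that M_i = 0 for all i ≥ r and such that the grade-0 component M_0 is stable under A_0. Let L be a completely reducible A-module and let 0 → L →ι E →π M → 0 be a short exact sequence of A-modules equipped with an 𝔞-grading E = E_0 ⊕ E_1 ⊕ ⋯ ⊕ E_r such that ι(L) = E_r and π is graded of degree 0 (π(E_i) = M_i for i < r and π(E_r) = 0). Then the grade-0 term may be rechosen: there exists an A_0-submodule E_0' of E such that E = E_0' ⊕ E_1 ⊕ ⋯ ⊕ E_r is again an 𝔞-grading of E (i.e. 𝔞_j E_0' ⊆ E_j for all j), π maps E_0' isomorphically onto M_0, and π is graded of degree 0 for the new grading. -/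
/-! Since `π` is graded and `ℰ r = ker π`, the preimage `π⁻¹(ℳ 0)` is `ℰ 0 ⊕ ℰ r`. Both
`π⁻¹(ℳ 0)` and `ℰ r` are `A₀`-stable, so semisimplicity of `A₀` gives an `A₀`-stable complement
`E₀'` of `ℰ r` in `π⁻¹(ℳ 0)`. Any complement of `ℰ r` inside `ℰ 0 ⊕ ℰ r` may replace `ℰ 0` in the
direct sum decomposition, and elements of `𝔞` of positive degree still send `E₀'` into the right
component because they kill `ℰ r`, all grades above `r` being zero. -/

section UpdateOneComponent

variable {α ι : Type*} [CompleteLattice α] [DecidableEq ι] {t : ι → α} {a b : ι} {x : α}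

theorem iSup_update_of_sup_eq (hab : a ≠ b) (hx : x ⊔ t b = t a ⊔ t b) :
    ⨆ i, Function.update t a x i = ⨆ i, t i := by
  have hb : t b ≤ ⨆ i, Function.update t a x i :=
    le_iSup_of_le b (Function.update_of_ne hab.symm x t).ge
  apply le_antisymm <;> refine iSup_le fun i => ?_
  · rcases eq_or_ne i a with rfl | hi
    · rw [Function.update_self]
      exact le_sup_left.trans (hx.le.trans (sup_le (le_iSup t i) (le_iSup t b)))
    · rw [Function.update_of_ne hi]
      exact le_iSup t i
  · rcases eq_or_ne i a with rfl | hi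
    · calc t i ≤ x ⊔ t b := hx ▸ le_sup_left
        _ ≤ _ := sup_le (le_iSup_of_le i (Function.update_self i x t).ge) hb
    · exact le_iSup_of_le i (Function.update_of_ne hi x t).ge

theorem iSupIndep.update_of_sup_eq [IsModularLattice α] (ht : iSupIndep t) (hab : a ≠ b)
    (hx : x ⊔ t b = t a ⊔ t b) (hxb : Disjoint x (t b)) :
    iSupIndep (Function.update t a x) := by
  -- `x`, `t b` and the rest `Y` form an independent triple; this settles both `k = a` and `k = b`.
  set Y := ⨆ j ∈ ({a, b} : Set ι)ᶜ, t j
  have hY : Disjoint (x ⊔ t b) Y := by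
    rw [hx, ← iSup_pair]
    exact ht.disjoint_biSup_biSup' disjoint_compl_right (Set.toFinite _)
  have le_Y {j} (hja : j ≠ a) (hjb : j ≠ b) : t j ≤ Y :=
    le_iSup₂_of_le (f := fun j (_ : j ∈ ({a, b} : Set ι)ᶜ) => t j) j (by simp [hja, hjb]) le_rfl
  rw [iSupIndep_def]
  intro k
  rcases eq_or_ne k a with rfl | hka
  · rw [Function.update_self]
    refine (hxb.disjoint_sup_right_of_disjoint_sup_left hY).mono_right (iSup₂_le fun j hj => ?_)
    rw [Function.update_of_ne hj]
    rcases eq_or_ne j b with rfl | hjb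
    · exact le_sup_left
    · exact le_sup_of_le_right (le_Y hj hjb)
  rcases eq_or_ne k b with rfl | hkb
  · rw [Function.update_of_ne hka]
    refine (hxb.symm.disjoint_sup_right_of_disjoint_sup_left (sup_comm x (t k) ▸ hY)).mono_right
      (iSup₂_le fun j hj => ?_)
    rcases eq_or_ne j a with rfl | hja
    · rw [Function.update_self]
      exact le_sup_left
    · rw [Function.update_of_ne hja]
      exact le_sup_of_le_right (le_Y hja hj)
  · rw [Function.update_of_ne hka]
    refine (ht k).mono_right (iSup₂_le fun j hj => ?_)
    rcases eq_or_ne j a with rfl | hja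
    · rw [Function.update_self]
      exact le_sup_left.trans (hx.le.trans
        (sup_le (le_iSup₂_of_le j hj le_rfl) (le_iSup₂_of_le b hkb.symm le_rfl)))
    · rw [Function.update_of_ne hja]
      exact le_iSup₂_of_le j hj le_rfl

end UpdateOneComponent

theorem Submodule.comap_eq_sup_ker_of_map_le {R E M ι : Type*} [Ring R] [AddCommGroup E]
    [Module R E] [AddCommGroup M] [Module R M] (f : E →ₗ[R] M) {ℰ : ι → Submodule R E}
    {ℳ : ι → Submodule R M} (hℰ : ⨆ i, ℰ i = ⊤) (hℳ : iSupIndep ℳ)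
    (hf : ∀ i, (ℰ i).map f ≤ ℳ i) (k : ι) :
    (ℳ k).comap f = ℰ k ⊔ LinearMap.ker f := by
  refine le_antisymm (fun x hx => ?_) (sup_le (map_le_iff_le_comap.mp (hf k)) ?_)
  · have hx' : x ∈ ℰ k ⊔ ⨆ (j) (_ : j ≠ k), ℰ j := by
      rw [← iSup_split_single, hℰ]
      trivial
    obtain ⟨e, he, z, hz, rfl⟩ := mem_sup.mp hx'
    have hfz_k : f z ∈ ℳ k := by
      simpa using sub_mem (mem_comap.mp hx) (hf k (mem_map_of_mem he))
    have hfz_ne : f z ∈ ⨆ (j) (_ : j ≠ k), ℳ j :=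
      (iSup₂_le fun j hj => map_le_iff_le_comap.mp ((hf j).trans (le_iSup₂_of_le j hj le_rfl)) :
        ⨆ (j) (_ : j ≠ k), ℰ j ≤ _) hz
    exact add_mem (mem_sup_left he) (mem_sup_right (disjoint_def.mp (hℳ k) _ hfz_k hfz_ne))
  · exact LinearMap.ker_le_comap f

theorem Subalgebra.exists_stable_disjoint_sup_eq {K A E : Type*} [CommRing K] [Ring A]
    [Algebra K A] [AddCommGroup E] [Module A E] [Module K E] [IsScalarTower K A E]
    (S : Subalgebra K A) [IsSemisimpleRing S] {p W : Submodule K E}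
    (hp : ∀ a ∈ S, ∀ x ∈ p, a • x ∈ p) (hW : ∀ a ∈ S, ∀ x ∈ W, a • x ∈ W) (hpW : p ≤ W) :
    ∃ F : Submodule K E, (∀ a ∈ S, ∀ x ∈ F, a • x ∈ F) ∧ Disjoint p F ∧ p ⊔ F = W := by
  let p' : Submodule S E := { p with smul_mem' := fun a x hx => hp a a.2 x hx }
  let W' : Submodule S E := { W with smul_mem' := fun a x hx => hW a a.2 x hx }
  obtain ⟨F, hdisj, hsup⟩ := IsModularLattice.exists_disjoint_and_sup_eq (show p' ≤ W' from hpW)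
  refine ⟨F.restrictScalars K, fun a ha x hx => F.smul_mem ⟨a, ha⟩ hx,
    (Submodule.disjoint_restrictScalars_iff K).mpr hdisj, ?_⟩
  exact (Submodule.restrictScalars_sup K p' F).symm.trans (congrArg _ hsup)

theorem smul_mem_update_zero {K A E : Type*} [Semiring K] [Semiring A] [AddCommMonoid E]
    [Module K E] [Module A E] {𝒶 : ℕ → Set A} {ℰ : ℕ → Submodule K E} {F : Submodule K E}
    {r : ℕ} (hact : ∀ i j, ∀ x ∈ 𝒶 i, ∀ m ∈ ℰ j, x • m ∈ ℰ (i + j))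
    (hvanish : ∀ i, r < i → ℰ i = ⊥) (hF : F ≤ ℰ 0 ⊔ ℰ r)
    (hF0 : ∀ x ∈ 𝒶 0, ∀ m ∈ F, x • m ∈ F) (i j : ℕ) :
    ∀ x ∈ 𝒶 i, ∀ m ∈ Function.update ℰ 0 F j, x • m ∈ Function.update ℰ 0 F (i + j) := by
  intro x hx m hm
  rcases eq_or_ne j 0 with rfl | hj
  · rw [Function.update_self] at hm
    rcases eq_or_ne i 0 with rfl | hi
    · simpa using hF0 x hx m hm
    · rw [add_zero, Function.update_of_ne hi]
      obtain ⟨m₀, hm₀, m_r, hm_r, rfl⟩ := Submodule.mem_sup.mp (hF hm)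
      have hx_r : x • m_r = 0 := by
        simpa [hvanish (i + r) (by omega)] using hact i r x hx m_r hm_r
      simpa [hx_r] using hact i 0 x hx m₀ hm₀
  · rw [Function.update_of_ne hj] at hm
    rw [Function.update_of_ne (by omega)]
    exact hact i j x hx m hm

theorem regrade_zero_term_general
    {K : Type*} [Field K] {A : Type*} [Ring A] [Algebra K A]
    (A₀ : Subalgebra K A) (hA₀ss : IsSemisimpleRing A₀)
    (𝒶 : ℕ → Submodule K A)
    (h𝒶0 : 𝒶 0 ≤ Subalgebra.toSubmodule A₀)
    (r : ℕ) (hr : 0 < r)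
    (M : Type*) [AddCommGroup M] [Module A M] [Module K M] [IsScalarTower K A M]
    (ℳ : ℕ → Submodule K M) (hℳindep : iSupIndep ℳ)
    (hℳ0stable : ∀ a ∈ A₀, ∀ m ∈ ℳ 0, a • m ∈ ℳ 0)
    (L : Type*) [AddCommGroup L] [Module A L]
    (E : Type*) [AddCommGroup E] [Module A E] [Module K E] [IsScalarTower K A E]
    (ι : L →ₗ[A] E) (π : E →ₗ[A] M)
    (hexact : LinearMap.range ι = LinearMap.ker π)
    (ℰ : ℕ → Submodule K E) (hℰindep : iSupIndep ℰ) (hℰsup : ⨆ i, ℰ i = ⊤)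
    (hℰact : ∀ i j : ℕ, ∀ x ∈ 𝒶 i, ∀ m ∈ ℰ j, x • m ∈ ℰ (i + j))
    (hℰvanish : ∀ i : ℕ, r < i → ℰ i = ⊥)
    (hιrange : (LinearMap.range ι).restrictScalars K = ℰ r)
    (hπgraded : ∀ i : ℕ, i < r → Submodule.map (π.restrictScalars K) (ℰ i) = ℳ i)
    (hπtop : Submodule.map (π.restrictScalars K) (ℰ r) = ⊥) :
    ∃ E₀' : Submodule K E,
      (∀ a ∈ A₀, ∀ x ∈ E₀', a • x ∈ E₀') ∧
      iSupIndep (fun i : ℕ => if i = 0 then E₀' else ℰ i) ∧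
      (⨆ i : ℕ, (if i = 0 then E₀' else ℰ i)) = ⊤ ∧
      (∀ i j : ℕ, ∀ x ∈ 𝒶 i, ∀ m ∈ (if j = 0 then E₀' else ℰ j),
        x • m ∈ (if i + j = 0 then E₀' else ℰ (i + j))) ∧
      Submodule.map (π.restrictScalars K) E₀' = ℳ 0 ∧
      (∀ x ∈ E₀', π x = 0 → x = 0) := by
  set πK := π.restrictScalars K
  have hker : LinearMap.ker πK = ℰ r := by
    rw [← hιrange, hexact]
    rfl
  have hmap : ∀ i, (ℰ i).map πK ≤ ℳ i := by
    intro i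
    rcases lt_trichotomy i r with hi | rfl | hi
    · exact (hπgraded i hi).le
    · exact hπtop.trans_le bot_le
    · rw [hℰvanish i hi, Submodule.map_bot]
      exact bot_le
  have hpreimage : (ℳ 0).comap πK = ℰ 0 ⊔ ℰ r := by
    rw [Submodule.comap_eq_sup_ker_of_map_le πK hℰsup hℳindep hmap, hker]
  obtain ⟨F, hFstable, hdisj, hsup⟩ := A₀.exists_stable_disjoint_sup_eq (p := ℰ r)
    (fun a _ x hx => by
      rw [← hker] at hx ⊢
      change π (a • x) = 0
      rw [π.map_smul, show π x = 0 from hx, smul_zero])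
    (fun a ha x hx => (π.map_smul a x).symm ▸ hℳ0stable a ha _ hx)
    (hpreimage ▸ le_sup_right)
  have hFℰ : F ⊔ ℰ r = ℰ 0 ⊔ ℰ r := by rw [sup_comm, hsup, hpreimage]
  have hupdate : (fun i => if i = 0 then F else ℰ i) = Function.update ℰ 0 F :=
    funext fun i => (Function.update_apply ℰ 0 F i).symm
  refine ⟨F, hFstable, hupdate ▸ hℰindep.update_of_sup_eq hr.ne hFℰ hdisj.symm,
    hupdate ▸ (iSup_update_of_sup_eq hr.ne hFℰ).trans hℰsup, ?_, ?_,
    fun x hx hx0 => Submodule.disjoint_def.mp hdisj x (hker ▸ hx0) hx⟩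
  · simpa only [Function.update_apply, SetLike.mem_coe] using smul_mem_update_zero hℰact hℰvanish
      (hFℰ ▸ le_sup_left) (fun x hx => hFstable x (h𝒶0 hx))
  · calc F.map πK = (F ⊔ ℰ r).map πK := by rw [Submodule.map_sup, hπtop, sup_bot_eq]
      _ = ℳ 0 := by rw [hFℰ, Submodule.map_sup, hπtop, hπgraded 0 hr, sup_bot_eq]

/-- Lemma 6.2: let `A` be a finite-dimensional `K`-algebra, `A₀ ⊆ A` a subalgebra which is a
semisimple ring, and `𝒶 : ℕ → Submodule K A` the graded components of a graded subalgebra `𝔞`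
of `A` (so `𝒶 i · 𝒶 j ⊆ 𝒶 (i+j)`) with `𝒶 0 ⊆ A₀`.  Fix `r > 0`.  Let `M` be a
finite-dimensional `A`-module with an `𝔞`-grading `ℳ` such that `ℳ i = 0` for `i ≥ r` and with
`ℳ 0` stable under `A₀`.  Let `L` be a completely reducible `A`-module, and let
`0 → L →ι E →π M → 0` be a short exact sequence of `A`-modules equipped with an `𝔞`-grading
`ℰ` of `E` (vanishing in grades `> r`) such that `ι(L) = ℰ r` and `π` is graded of degree 0
(`π(ℰ i) = ℳ i` for `i < r`, `π(ℰ r) = 0`).  Then the grade-0 term may be rechosen: there is an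
`A₀`-stable `K`-subspace `E₀'` of `E` such that replacing `ℰ 0` by `E₀'` again yields an
`𝔞`-grading of `E`, `π` maps `E₀'` isomorphically onto `ℳ 0`, and the remaining graded pieces
`ℰ 1, …, ℰ r` are unchanged. -/
theorem regrade_zero_term
    {K : Type*} [Field K] {A : Type*} [Ring A] [Algebra K A] [FiniteDimensional K A]
    (A₀ : Subalgebra K A) (hA₀ss : IsSemisimpleRing A₀)
    (𝒶 : ℕ → Submodule K A)
    (h𝒶mul : ∀ i j : ℕ, ∀ x ∈ 𝒶 i, ∀ y ∈ 𝒶 j, x * y ∈ 𝒶 (i + j))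
    (h𝒶0 : 𝒶 0 ≤ Subalgebra.toSubmodule A₀)
    (r : ℕ) (hr : 0 < r)
    (M : Type*) [AddCommGroup M] [Module A M] [Module K M] [IsScalarTower K A M]
    [FiniteDimensional K M]
    (ℳ : ℕ → Submodule K M) (hℳindep : iSupIndep ℳ) (hℳsup : ⨆ i, ℳ i = ⊤)
    (hℳact : ∀ i j : ℕ, ∀ x ∈ 𝒶 i, ∀ m ∈ ℳ j, x • m ∈ ℳ (i + j))
    (hℳvanish : ∀ i : ℕ, r ≤ i → ℳ i = ⊥)
    (hℳ0stable : ∀ a ∈ A₀, ∀ m ∈ ℳ 0, a • m ∈ ℳ 0)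
    (L : Type*) [AddCommGroup L] [Module A L] [Module K L] [IsScalarTower K A L]
    [FiniteDimensional K L] [IsSemisimpleModule A L]
    (E : Type*) [AddCommGroup E] [Module A E] [Module K E] [IsScalarTower K A E]
    [FiniteDimensional K E]
    (ι : L →ₗ[A] E) (π : E →ₗ[A] M)
    (hιinj : Function.Injective ι) (hπsurj : Function.Surjective π)
    (hexact : LinearMap.range ι = LinearMap.ker π)
    (ℰ : ℕ → Submodule K E) (hℰindep : iSupIndep ℰ) (hℰsup : ⨆ i, ℰ i = ⊤)
    (hℰact : ∀ i j : ℕ, ∀ x ∈ 𝒶 i, ∀ m ∈ ℰ j, x • m ∈ ℰ (i + j))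
    (hℰvanish : ∀ i : ℕ, r < i → ℰ i = ⊥)
    (hιrange : (LinearMap.range ι).restrictScalars K = ℰ r)
    (hπgraded : ∀ i : ℕ, i < r → Submodule.map (π.restrictScalars K) (ℰ i) = ℳ i)
    (hπtop : Submodule.map (π.restrictScalars K) (ℰ r) = ⊥) :
    ∃ E₀' : Submodule K E,
      (∀ a ∈ A₀, ∀ x ∈ E₀', a • x ∈ E₀') ∧
      iSupIndep (fun i : ℕ => if i = 0 then E₀' else ℰ i) ∧
      (⨆ i : ℕ, (if i = 0 then E₀' else ℰ i)) = ⊤ ∧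
      (∀ i j : ℕ, ∀ x ∈ 𝒶 i, ∀ m ∈ (if j = 0 then E₀' else ℰ j),
        x • m ∈ (if i + j = 0 then E₀' else ℰ (i + j))) ∧
      Submodule.map (π.restrictScalars K) E₀' = ℳ 0 ∧
      (∀ x ∈ E₀', π x = 0 → x = 0) :=
  regrade_zero_term_general A₀ hA₀ss 𝒶 h𝒶0 r hr M ℳ hℳindep hℳ0stable L E ι π hexact ℰ hℰindep hℰsup
    hℰact hℰvanish hιrange hπgraded hπtop
end
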